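/- Expected mistake upper bound for randomized realizable apple tasting: for any hypothesis class H, the minimax expected number of mistakes over T rounds under apple tasting feedback in the realizable setting is at most inf over w ∈ ℕ of AL_w(H) + 2√((w−1)T). -/

import Mathlib

open scoped ENNReal NNReal


/-- `ALShatter H w d` : the hypothesis class `H` shatters some Apple Littlestone tree of
width `w` and depth `d`. Width `0` means the path has already ended (took the maximal
number of right/1 edges), in which case shattering only requires a consistent hypothesis. -/
def ALShatter {X : Type*} : Set (X → Bool) → ℕ → ℕ → Prop
  | H, _, 0 => H.Nonempty
  | H, 0, _ + 1 => H.Nonempty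
  | H, w + 1, d + 1 =>
      ∃ x : X, ALShatter {h | h ∈ H ∧ h x = false} (w + 1) d ∧
               ALShatter {h | h ∈ H ∧ h x = true} w d

/-- The Apple Littlestone dimension of `H` at width `w`. -/
noncomputable def ALdim {X : Type*} (H : Set (X → Bool)) (w : ℕ) : ℕ∞ :=
  sSup {d : ℕ∞ | ∃ n : ℕ, ALShatter H w n ∧ d = (n : ℕ∞)}

/-- `LShatter H d` : `H` shatters some Littlestone tree of depth `d`. -/
def LShatter {X : Type*} : Set (X → Bool) → ℕ → Prop
  | H, 0 => H.Nonempty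
  | H, d + 1 =>
      ∃ x : X, LShatter {h | h ∈ H ∧ h x = false} d ∧
               LShatter {h | h ∈ H ∧ h x = true} d

/-- The Littlestone dimension of `H`. -/
noncomputable def Ldim {X : Type*} (H : Set (X → Bool)) : ℕ∞ :=
  sSup {d : ℕ∞ | ∃ n : ℕ, LShatter H n ∧ d = (n : ℕ∞)}

/-- The Effective width of `H`: the least width `w ≥ 1` at which the
Apple Littlestone dimension is finite. -/
noncomputable def EffW {X : Type*} (H : Set (X → Bool)) : ℕ∞ :=
  sInf {w : ℕ∞ | ∃ n : ℕ, 1 ≤ n ∧ ALdim H n ≠ ⊤ ∧ w = (n : ℕ∞)}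
/-- One run of a randomized apple-tasting learner `A` (a map from the apple-tasting
history — past instances together with the label if it was observed — and the current
instance, to a distribution over predictions) on the stream `x` with true labels `y`:
the distribution, after `t` rounds, of the pair (history, number of mistakes so far).
The label `y t` is recorded (observed) only when the prediction is 1. -/
noncomputable def runAT {X : Type*} (A : List (X × Option Bool) → X → PMF Bool)
    (x : ℕ → X) (y : ℕ → Bool) : ℕ → PMF (List (X × Option Bool) × ℕ)
  | 0 => PMF.pure ([], 0)
  | t + 1 =>
      (runAT A x y t).bind fun s =>
        (A s.1 (x t)).bind fun b =>
          PMF.pure (s.1 ++ [(x t, if b then some (y t) else none)],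
            s.2 + (if b ≠ y t then 1 else 0))

/-- Expected number of mistakes of the randomized apple-tasting learner `A` over `T`
rounds on the stream `x` with true labels `y`. -/
noncomputable def expMistakes {X : Type*} (A : List (X × Option Bool) → X → PMF Bool)
    (x : ℕ → X) (y : ℕ → Bool) (T : ℕ) : ℝ≥0∞ :=
  ∑' s : List (X × Option Bool) × ℕ, runAT A x y T s * s.2

/-- Coercion from ℕ∞ to ℝ≥0∞. -/
noncomputable def enatToENNReal (n : ℕ∞) : ℝ≥0∞ :=
  if n = ⊤ then ⊤ else (n.toNat : ℝ≥0∞)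

/-!
A deterministic learner keeps the version space `V` of hypotheses consistent with the labels
seen so far and a width budget `k`, and predicts `0` on `x` only when a false negative is
affordable, i.e. when the branch of `V` labelling `x` by `1` has Apple Littlestone dimension
at width `k` at most that of `V` at width `k + 1`. A point splitting `V` into two nonempty
branches extends trees shattered by both branches by one level, so each false positive
lowers the dimension; each false negative lowers `k`. Started at `(H, w - 1)` it makes at
most `AL_w(H)` false positives and `w - 1` false negatives.

In the apple-tasting game follow its `1`s and turn each `0` into a `1` with probability `p`,
updating only on observed labels. Then mistakes plus the potential `AL + k / p` grow by at
most `p` per round in expectation, giving `AL_w(H) + (w - 1) / p + p T`, which equals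
`AL_w(H) + 2 √((w - 1) T)` for `p = √((w - 1) / T)`. Tuning `p` for the best `w ≤ T + 1`
serves every `w` at once, since for `w > T + 1` the bound exceeds the trivial `T`.
-/

section VersionSpace

variable {X : Type*}

def branch (V : Set (X → Bool)) (x : X) (b : Bool) : Set (X → Bool) := {g | g ∈ V ∧ g x = b}

theorem branch_subset (V : Set (X → Bool)) (x : X) (b : Bool) : branch V x b ⊆ V :=
  fun _ hg => hg.1

theorem branch_mono {V V' : Set (X → Bool)} (hV : V ⊆ V') (x : X) (b : Bool) :
    branch V x b ⊆ branch V' x b :=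
  fun _ hg => ⟨hV hg.1, hg.2⟩

theorem mem_branch_self {h : X → Bool} {V : Set (X → Bool)} (hh : h ∈ V) (x : X) :
    h ∈ branch V x (h x) :=
  ⟨hh, rfl⟩

section Shatter

variable {H H' : Set (X → Bool)} {w d : ℕ}

theorem ALShatter_zero_depth : ALShatter H w 0 ↔ H.Nonempty := by
  cases w <;> rfl

theorem ALShatter_zero_width : ALShatter H 0 d ↔ H.Nonempty := by
  cases d <;> rfl

theorem ALShatter_succ_succ :
    ALShatter H (w + 1) (d + 1) ↔
      ∃ x, ALShatter (branch H x false) (w + 1) d ∧ ALShatter (branch H x true) w d :=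
  Iff.rfl

theorem ALShatter.nonempty (hH : ALShatter H w d) : H.Nonempty := by
  induction d generalizing H w with
  | zero => exact ALShatter_zero_depth.mp hH
  | succ d ih =>
    cases w with
    | zero => exact ALShatter_zero_width.mp hH
    | succ w =>
      obtain ⟨x, hfalse, -⟩ := ALShatter_succ_succ.mp hH
      exact (ih hfalse).mono (branch_subset H x false)

theorem ALShatter.mono (hHH' : H ⊆ H') (hH : ALShatter H w d) : ALShatter H' w d := by
  induction d generalizing H H' w with
  | zero => exact ALShatter_zero_depth.mpr ((ALShatter_zero_depth.mp hH).mono hHH')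
  | succ d ih =>
    cases w with
    | zero => exact ALShatter_zero_width.mpr ((ALShatter_zero_width.mp hH).mono hHH')
    | succ w =>
      obtain ⟨x, hfalse, htrue⟩ := ALShatter_succ_succ.mp hH
      exact ALShatter_succ_succ.mpr
        ⟨x, ih (branch_mono hHH' x false) hfalse, ih (branch_mono hHH' x true) htrue⟩

theorem ALShatter.of_succ_depth (hH : ALShatter H w (d + 1)) : ALShatter H w d := by
  induction d generalizing H w with
  | zero => exact ALShatter_zero_depth.mpr hH.nonempty
  | succ d ih =>
    cases w with
    | zero => exact ALShatter_zero_width.mpr hH.nonempty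
    | succ w =>
      obtain ⟨x, hfalse, htrue⟩ := ALShatter_succ_succ.mp hH
      exact ALShatter_succ_succ.mpr ⟨x, ih hfalse, ih htrue⟩

theorem ALShatter.of_le_depth {d' : ℕ} (hd : d' ≤ d) (hH : ALShatter H w d) :
    ALShatter H w d' := by
  induction hd with
  | refl => exact hH
  | step _ ih => exact ih hH.of_succ_depth

end Shatter

section Dimension

variable {H V : Set (X → Bool)} {w : ℕ}

theorem le_ALdim {n : ℕ} (hH : ALShatter H w n) : (n : ℕ∞) ≤ ALdim H w :=
  le_sSup ⟨n, hH, rfl⟩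

theorem ALdim_mono {H' : Set (X → Bool)} (hHH' : H ⊆ H') (w : ℕ) : ALdim H w ≤ ALdim H' w :=
  sSup_le fun _ ⟨_, hn, hd⟩ => hd ▸ le_ALdim (hn.mono hHH')

theorem ALShatter_of_le_ALdim (hH : H.Nonempty) {n : ℕ} (hn : (n : ℕ∞) ≤ ALdim H w) :
    ALShatter H w n := by
  cases n with
  | zero => exact ALShatter_zero_depth.mpr hH
  | succ m =>
    obtain ⟨_, ⟨k, hk, rfl⟩, hmk⟩ :=
      lt_sSup_iff.mp ((ENat.natCast_lt_natCast.mpr m.lt_succ_self).trans_le hn)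
    exact hk.of_le_depth (ENat.natCast_lt_natCast.mp hmk)

theorem ALdim_zero_width (hH : H.Nonempty) : ALdim H 0 = ⊤ :=
  ENat.eq_top_iff_forall_ge.mpr fun _ => le_ALdim (ALShatter_zero_width.mpr hH)

theorem min_ALdim_branch_add_one_le {x : X} (hfalse : (branch V x false).Nonempty)
    (htrue : (branch V x true).Nonempty) (w : ℕ) :
    min (ALdim (branch V x false) (w + 1)) (ALdim (branch V x true) w) + 1 ≤ ALdim V (w + 1) := by
  have hext : ∀ n : ℕ, (n : ℕ∞) ≤ min (ALdim (branch V x false) (w + 1))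
      (ALdim (branch V x true) w) → ((n + 1 : ℕ) : ℕ∞) ≤ ALdim V (w + 1) := fun n hn =>
    le_ALdim (ALShatter_succ_succ.mpr
      ⟨x, ALShatter_of_le_ALdim hfalse (hn.trans (min_le_left _ _)),
        ALShatter_of_le_ALdim htrue (hn.trans (min_le_right _ _))⟩)
  generalize min (ALdim (branch V x false) (w + 1)) (ALdim (branch V x true) w) = m at hext
  induction m using ENat.recTopCoe with
  | top =>
    rw [top_add, top_le_iff, ENat.eq_top_iff_forall_ge]
    exact fun n => (Nat.cast_le.mpr n.le_succ).trans (hext n le_top)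
  | coe m => exact_mod_cast hext m le_rfl

theorem ALdim_branch_false_add_one_le {x : X} {k : ℕ} (hfalse : (branch V x false).Nonempty)
    (htrue : (branch V x true).Nonempty)
    (hk : k = 0 ∨ ALdim V (k + 1) < ALdim (branch V x true) k) :
    ALdim (branch V x false) (k + 1) + 1 ≤ ALdim V (k + 1) := by
  by_cases htop : ALdim V (k + 1) = ⊤
  · simp [htop]
  have hlt : ALdim V (k + 1) < ALdim (branch V x true) k := by
    rcases hk with rfl | hk
    · rw [ALdim_zero_width htrue]
      exact lt_top_iff_ne_top.mpr htop
    · exact hk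
  have hmin := min_ALdim_branch_add_one_le hfalse htrue k
  have hfalse_lt : ALdim (branch V x false) (k + 1) < ALdim (branch V x true) k := by
    simpa using min_lt_iff.mp ((le_self_add.trans hmin).trans_lt hlt)
  rwa [min_eq_left hfalse_lt.le] at hmin

end Dimension

end VersionSpace

section Potential

variable {X : Type*}

theorem PMF.tsum_bind_mul {α β : Type*} (q : PMF α) (f : α → PMF β) (g : β → ℝ≥0∞) :
    ∑' b, q.bind f b * g b = ∑' a, q a * ∑' b, f a b * g b := by
  simp_rw [PMF.bind_apply, ← ENNReal.tsum_mul_right, mul_assoc, ← ENNReal.tsum_mul_left]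
  exact ENNReal.tsum_comm

theorem PMF.tsum_mul_add_const {α : Type*} (q : PMF α) (g : α → ℝ≥0∞) (c : ℝ≥0∞) :
    ∑' a, q a * (g a + c) = ∑' a, q a * g a + c := by
  simp_rw [mul_add, ENNReal.tsum_add, ENNReal.tsum_mul_right, q.tsum_coe, one_mul]

variable (A : List (X × Option Bool) → X → PMF Bool) (x : ℕ → X) (y : ℕ → Bool)

theorem runAT_zero : runAT A x y 0 = PMF.pure ([], 0) := rfl

theorem runAT_succ (t : ℕ) :
    runAT A x y (t + 1) = (runAT A x y t).bind fun s =>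
      (A s.1 (x t)).bind fun b =>
        PMF.pure (s.1 ++ [(x t, if b then some (y t) else none)],
          s.2 + (if b ≠ y t then 1 else 0)) := rfl

theorem fst_mem_of_mem_support_runAT {G : Set (List (X × Option Bool))} (hG₀ : [] ∈ G)
    (hG : ∀ t, ∀ hist ∈ G, ∀ b : Bool, hist ++ [(x t, if b then some (y t) else none)] ∈ G)
    {t : ℕ} {s : List (X × Option Bool) × ℕ} (hs : s ∈ (runAT A x y t).support) : s.1 ∈ G := by
  induction t generalizing s with
  | zero =>
    rw [runAT_zero, PMF.mem_support_pure_iff] at hs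
    exact hs ▸ hG₀
  | succ t ih =>
    simp only [runAT_succ, PMF.mem_support_bind_iff, PMF.mem_support_pure_iff] at hs
    obtain ⟨s', hs', b, -, rfl⟩ := hs
    exact hG t s'.1 (ih hs') b

theorem tsum_runAT_succ_mul_le (t : ℕ) (g : List (X × Option Bool) × ℕ → ℝ≥0∞) (c : ℝ≥0∞)
    (hg : ∀ s ∈ (runAT A x y t).support, ∑' b, A s.1 (x t) b *
      g (s.1 ++ [(x t, if b then some (y t) else none)], s.2 + if b ≠ y t then 1 else 0) ≤
        g s + c) :
    ∑' s, runAT A x y (t + 1) s * g s ≤ ∑' s, runAT A x y t s * g s + c := by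
  calc ∑' s, runAT A x y (t + 1) s * g s
      = ∑' s, runAT A x y t s * ∑' b, A s.1 (x t) b *
          g (s.1 ++ [(x t, if b then some (y t) else none)], s.2 + if b ≠ y t then 1 else 0) := by
        simp only [runAT_succ, PMF.tsum_bind_mul, PMF.pure_apply, ite_mul, one_mul, zero_mul,
          tsum_ite_eq]
    _ ≤ ∑' s, runAT A x y t s * (g s + c) := by
        refine ENNReal.tsum_le_tsum fun s => ?_
        by_cases hs : s ∈ (runAT A x y t).support
        · exact mul_le_mul_right (hg s hs) _
        · simp [(PMF.apply_eq_zero_iff _ _).mpr hs]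
    _ = ∑' s, runAT A x y t s * g s + c := PMF.tsum_mul_add_const _ _ _

theorem expMistakes_le_of_potential (G : Set (List (X × Option Bool)))
    (Φ : List (X × Option Bool) → ℝ≥0∞) (c : ℝ≥0∞) (hG₀ : [] ∈ G)
    (hG : ∀ t, ∀ hist ∈ G, ∀ b : Bool, hist ++ [(x t, if b then some (y t) else none)] ∈ G)
    (hΦ : ∀ t, ∀ hist ∈ G, ∑' b, A hist (x t) b * ((if b ≠ y t then 1 else 0) +
      Φ (hist ++ [(x t, if b then some (y t) else none)])) ≤ Φ hist + c) (T : ℕ) :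
    expMistakes A x y T ≤ Φ [] + T * c := by
  let F : List (X × Option Bool) × ℕ → ℝ≥0∞ := fun s => s.2 + Φ s.1
  have hF : ∀ t, ∑' s, runAT A x y t s * F s ≤ Φ [] + t * c := by
    intro t
    induction t with
    | zero => simp [runAT_zero, F, PMF.pure_apply]
    | succ t ih =>
      refine (tsum_runAT_succ_mul_le A x y t F c fun s hs => ?_).trans ?_
      · calc _ = ∑' b, A s.1 (x t) b * (((if b ≠ y t then 1 else 0) +
                Φ (s.1 ++ [(x t, if b then some (y t) else none)])) + s.2) := by
              congr! 2 with b
              simp only [F, Nat.cast_add, Nat.cast_ite, Nat.cast_one, Nat.cast_zero]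
              ring
          _ ≤ Φ s.1 + c + s.2 := by
              rw [PMF.tsum_mul_add_const]
              gcongr
              exact hΦ t s.1 (fst_mem_of_mem_support_runAT A x y hG₀ hG hs)
          _ = F s + c := by simp only [F]; ring
      · calc _ ≤ Φ [] + t * c + c := by gcongr
          _ = Φ [] + (t + 1 : ℕ) * c := by push_cast; ring
  exact (ENNReal.tsum_le_tsum fun s => mul_le_mul_right le_self_add _).trans (hF T)

theorem expMistakes_le_rounds (T : ℕ) : expMistakes A x y T ≤ T := by
  simpa using expMistakes_le_of_potential A x y Set.univ (fun _ => 0) 1 trivial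
    (fun _ _ _ _ => trivial) (fun t hist _ => by
      calc _ ≤ ∑' b, A hist (x t) b * 1 := by
            gcongr with b
            split_ifs <;> simp
        _ = 0 + 1 := by simp only [mul_one, zero_add, PMF.tsum_coe]) T

end Potential

section Explore

variable {X S : Type*}

noncomputable def biasedCoin (p : ℝ≥0∞) (hp : p ≤ 1) : PMF Bool :=
  PMF.ofFintype (fun b => cond b p (1 - p)) (by simp [hp])

def replay (s₀ : S) (u : S → X → Bool → S) (hist : List (X × Option Bool)) : S :=
  hist.foldl (fun σ e => e.2.elim σ (u σ e.1)) s₀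

theorem replay_append_singleton (s₀ : S) (u : S → X → Bool → S) (hist : List (X × Option Bool))
    (x : X) (b y : Bool) :
    replay s₀ u (hist ++ [(x, if b then some y else none)]) =
      if b then u (replay s₀ u hist) x y else replay s₀ u hist := by
  cases b <;> simp [replay]

noncomputable def exploreLearner (s₀ : S) (f : S → X → Bool) (u : S → X → Bool → S) (p : ℝ≥0∞)
    (hp : p ≤ 1) : List (X × Option Bool) → X → PMF Bool :=
  fun hist x => if f (replay s₀ u hist) x then PMF.pure true else biasedCoin p hp

theorem le_of_explore_correct_negative {p Φ Φ' : ℝ≥0∞} (hp : p ≤ 1) (hΦ : Φ' ≤ Φ) :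
    (1 - p) * Φ + p * (1 + Φ') ≤ Φ + p := by
  calc (1 - p) * Φ + p * (1 + Φ') ≤ (1 - p) * Φ + p * (1 + Φ) := by gcongr
    _ = (1 - p + p) * Φ + p := by ring
    _ = Φ + p := by rw [tsub_add_cancel_of_le hp, one_mul]

theorem le_of_explore_false_negative {p Φ Φ' : ℝ≥0∞} (hp : p ≤ 1) (hΦ : Φ' + p⁻¹ ≤ Φ) :
    (1 - p) * (1 + Φ) + p * Φ' ≤ Φ + p := by
  rcases eq_or_ne p 0 with rfl | hp0
  · simp_all
  calc (1 - p) * (1 + Φ) + p * Φ' ≤ 1 + (1 - p) * Φ + p * Φ' := by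
        rw [mul_add, mul_one]
        gcongr
        exact tsub_le_self
    _ = (1 - p) * Φ + p * (Φ' + p⁻¹) := by
        rw [mul_add, ENNReal.mul_inv_cancel hp0 (ne_top_of_le_ne_top ENNReal.one_ne_top hp)]
        ring
    _ ≤ (1 - p + p) * Φ := by
        rw [add_mul]
        gcongr
    _ ≤ Φ + p := by rw [tsub_add_cancel_of_le hp, one_mul]; exact le_self_add

theorem exploreLearner_step_le (f : S → X → Bool) (u : S → X → Bool → S) {p : ℝ≥0∞}
    (hp : p ≤ 1) (Φ : S → ℝ≥0∞) (σ : S) (x : X) (y : Bool)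
    (hΦ : Φ (u σ x y) + (f σ x && !y).toNat + (!f σ x && y).toNat * p⁻¹ ≤ Φ σ) :
    ∑' b, (if f σ x then PMF.pure true else biasedCoin p hp) b *
      ((if b ≠ y then 1 else 0) + Φ (if b then u σ x y else σ)) ≤ Φ σ + p := by
  rw [tsum_bool]
  generalize f σ x = a at hΦ ⊢
  cases a <;> cases y <;>
    simp only [biasedCoin, PMF.ofFintype_apply, PMF.pure_apply, cond_false, cond_true,
      Bool.not_false, Bool.not_true, Bool.and_false, Bool.and_true,
      Bool.toNat_false, Bool.toNat_true, Nat.cast_zero, Nat.cast_one, zero_mul,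
      one_mul, add_zero, ne_eq, not_true_eq_false, not_false_eq_true, reduceCtorEq, if_true,
      if_false, Bool.false_eq_true, zero_add] at hΦ ⊢
  · exact le_of_explore_correct_negative hp hΦ
  · exact le_of_explore_false_negative hp hΦ
  · exact (add_comm 1 _).trans_le (hΦ.trans le_self_add)
  · exact hΦ.trans le_self_add

theorem expMistakes_exploreLearner_le (s₀ : S) (f : S → X → Bool) (u : S → X → Bool → S)
    (G : Set S) (fp fn : S → ℕ∞) (h : X → Bool) (hs₀ : s₀ ∈ G)
    (hG : ∀ σ ∈ G, ∀ x, u σ x (h x) ∈ G)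
    (hfp : ∀ σ ∈ G, ∀ x, fp (u σ x (h x)) + (f σ x && !h x).toNat ≤ fp σ)
    (hfn : ∀ σ ∈ G, ∀ x, fn (u σ x (h x)) + (!f σ x && h x).toNat ≤ fn σ)
    {p : ℝ≥0∞} (hp : p ≤ 1) (x : ℕ → X) (T : ℕ) :
    expMistakes (exploreLearner s₀ f u p hp) x (fun t => h (x t)) T ≤
      fp s₀ + fn s₀ / p + T * p := by
  let Φ : S → ℝ≥0∞ := fun σ => fp σ + fn σ * p⁻¹
  have hΦ : ∀ σ ∈ G, ∀ x', Φ (u σ x' (h x')) + (f σ x' && !h x').toNat +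
      (!f σ x' && h x').toNat * p⁻¹ ≤ Φ σ := fun σ hσ x' =>
    calc _ = (fp (u σ x' (h x')) + (f σ x' && !h x').toNat : ℝ≥0∞) +
          (fn (u σ x' (h x')) + (!f σ x' && h x').toNat) * p⁻¹ := by ring
      _ ≤ fp σ + fn σ * p⁻¹ := by
        gcongr
        exacts [by exact_mod_cast hfp σ hσ x', by exact_mod_cast hfn σ hσ x']
  have := expMistakes_le_of_potential (exploreLearner s₀ f u p hp) x (fun t => h (x t))
    {hist | replay s₀ u hist ∈ G} (fun hist => Φ (replay s₀ u hist)) p hs₀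
    (fun t hist hhist b => by
      simp only [Set.mem_ofPred_eq, replay_append_singleton]
      split
      exacts [hG _ hhist _, hhist])
    (fun t hist hhist => by
      simp only [replay_append_singleton, exploreLearner]
      exact exploreLearner_step_le f u hp Φ _ _ _ (hΦ _ hhist _)) T
  simpa [Φ, div_eq_mul_inv, replay] using this

end Explore

section WidthLearner

variable {X : Type*}

open Classical in
/-- The state `(V, k)` is the version space and the number of false negatives still
affordable; its dimension is measured at width `k + 1`. -/
noncomputable def alPredict (σ : Set (X → Bool) × ℕ) (x : X) : Bool :=
  decide ((branch σ.1 x true).Nonempty ∧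
    (σ.2 = 0 ∨ ALdim σ.1 (σ.2 + 1) < ALdim (branch σ.1 x true) σ.2))

noncomputable def alUpdate (σ : Set (X → Bool) × ℕ) (x : X) (y : Bool) :
    Set (X → Bool) × ℕ :=
  (branch σ.1 x y, if !alPredict σ x && y then σ.2 - 1 else σ.2)

variable {h : X → Bool} {σ : Set (X → Bool) × ℕ}

theorem affordable_of_alPredict_eq_false {x : X} (hh : h ∈ σ.1) (hx : h x = true)
    (hf : alPredict σ x = false) :
    σ.2 ≠ 0 ∧ ALdim (branch σ.1 x true) σ.2 ≤ ALdim σ.1 (σ.2 + 1) := by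
  have htrue : (branch σ.1 x true).Nonempty := ⟨h, hh, hx⟩
  simpa [alPredict, htrue] using hf

theorem alUpdate_snd_add_le (hh : h ∈ σ.1) (x : X) :
    (alUpdate σ x (h x)).2 + (!alPredict σ x && h x).toNat ≤ σ.2 := by
  cases hf : alPredict σ x <;> cases hx : h x <;> simp [alUpdate, hf]
  have := (affordable_of_alPredict_eq_false hh hx hf).1
  omega

theorem ALdim_alUpdate_add_le (hh : h ∈ σ.1) (x : X) :
    ALdim (alUpdate σ x (h x)).1 ((alUpdate σ x (h x)).2 + 1) + (alPredict σ x && !h x).toNat ≤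
      ALdim σ.1 (σ.2 + 1) := by
  cases hf : alPredict σ x <;> cases hx : h x <;>
    simp only [alUpdate, hf, Bool.not_false, Bool.not_true, Bool.and_true, Bool.and_false,
      Bool.toNat_false, Bool.toNat_true, if_true, if_false,
      Nat.cast_zero, Nat.cast_one, add_zero, Bool.false_eq_true]
  · exact ALdim_mono (branch_subset _ _ _) _
  · obtain ⟨hk, hle⟩ := affordable_of_alPredict_eq_false hh hx hf
    rwa [Nat.sub_add_cancel (Nat.pos_of_ne_zero hk)]
  · have hpred : (branch σ.1 x true).Nonempty ∧
        (σ.2 = 0 ∨ ALdim σ.1 (σ.2 + 1) < ALdim (branch σ.1 x true) σ.2) := by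
      simpa [alPredict] using hf
    exact ALdim_branch_false_add_one_le ⟨h, hh, hx⟩ hpred.1 hpred.2
  · exact ALdim_mono (branch_subset _ _ _) _

theorem expMistakes_exploreLearner_alPredict_le (H : Set (X → Bool)) (k : ℕ) {p : ℝ≥0∞} (hp : p ≤ 1)
    (hh : h ∈ H) (x : ℕ → X) (T : ℕ) :
    expMistakes (exploreLearner (H, k) alPredict alUpdate p hp) x (fun t => h (x t)) T ≤
      ALdim H (k + 1) + k / p + T * p := by
  simpa using expMistakes_exploreLearner_le (H, k) alPredict alUpdate {σ | h ∈ σ.1}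
    (fun σ => ALdim σ.1 (σ.2 + 1)) (fun σ => σ.2) h hh
    (fun σ hσ x => mem_branch_self hσ x) (fun σ hσ x => ALdim_alUpdate_add_le hσ x)
    (fun σ hσ x => by exact_mod_cast alUpdate_snd_add_le hσ x) hp x T

end WidthLearner

theorem enatToENNReal_eq (n : ℕ∞) : enatToENNReal n = n := by
  induction n using ENat.recTopCoe <;> simp [enatToENNReal]

theorem ofReal_sqrt_div_le_one {a T : ℕ} (haT : a ≤ T) : ENNReal.ofReal √(a / T) ≤ 1 :=
  ENNReal.ofReal_le_one.mpr (Real.sqrt_le_one.mpr (div_le_one_of_le₀ (by exact_mod_cast haT)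
    (Nat.cast_nonneg T)))

theorem div_ofReal_sqrt_add_mul_ofReal_sqrt {a T : ℕ} (haT : a ≤ T) :
    (a : ℝ≥0∞) / ENNReal.ofReal √(a / T) + T * ENNReal.ofReal √(a / T) =
      ENNReal.ofReal (2 * √(a * T)) := by
  rcases Nat.eq_zero_or_pos a with rfl | ha
  · simp
  have hT : (0 : ℝ) < T := by exact_mod_cast ha.trans_le haT
  have ha' : (0 : ℝ) < a := by exact_mod_cast ha
  have hs : 0 < √(a / T) := Real.sqrt_pos.mpr (div_pos ha' hT)
  rw [← ENNReal.ofReal_natCast, ← ENNReal.ofReal_div_of_pos hs, ← ENNReal.ofReal_natCast T,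
    ← ENNReal.ofReal_mul (Nat.cast_nonneg T), ← ENNReal.ofReal_add (by positivity) (by positivity)]
  congr 1
  rw [Real.sqrt_div ha'.le, Real.sqrt_mul ha'.le]
  have hsa := Real.sq_sqrt ha'.le
  have hsT := Real.sq_sqrt hT.le
  have hsT_pos : 0 < √(T : ℝ) := Real.sqrt_pos.mpr hT
  have hsa_pos : 0 < √(a : ℝ) := Real.sqrt_pos.mpr ha'
  field_simp
  nlinarith

theorem natCast_le_ofReal_two_sqrt {a : ℝ} {T : ℕ} (hTa : (T : ℝ) ≤ a) :
    (T : ℝ≥0∞) ≤ ENNReal.ofReal (2 * √(a * T)) := by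
  rw [← ENNReal.ofReal_natCast]
  refine ENNReal.ofReal_le_ofReal ?_
  calc (T : ℝ) = √(T * T) := (Real.sqrt_mul_self (Nat.cast_nonneg T)).symm
    _ ≤ √(a * T) := Real.sqrt_le_sqrt (by gcongr)
    _ ≤ 2 * √(a * T) := by linarith [Real.sqrt_nonneg (a * T)]

/-- randomized realizable upper bound for apple tasting. There is a
randomized apple-tasting learner whose expected number of mistakes over T rounds on any
stream realizable by H is at most inf_{w ∈ ℕ} AL_w(H) + 2√((w-1)T). -/
theorem apple_tasting_realizable_upper_bound {X : Type*} (H : Set (X → Bool)) (T : ℕ) :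
    ∃ A : List (X × Option Bool) → X → PMF Bool,
      ∀ w : ℕ, 1 ≤ w → ∀ h ∈ H, ∀ x : ℕ → X,
        expMistakes A x (fun t => h (x t)) T ≤
          enatToENNReal (ALdim H w) +
            ENNReal.ofReal (2 * Real.sqrt (((w : ℝ) - 1) * T)) := by
  let B : ℕ → ℝ≥0∞ := fun w =>
    enatToENNReal (ALdim H w) + ENNReal.ofReal (2 * Real.sqrt (((w : ℝ) - 1) * T))
  obtain ⟨w₀, hw₀, hmin⟩ := (Finset.Icc 1 (T + 1)).exists_min_image B ⟨1, by simp⟩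
  obtain ⟨k, rfl⟩ : ∃ k, w₀ = k + 1 := ⟨w₀ - 1, by grind⟩
  have hkT : k ≤ T := by grind
  refine ⟨exploreLearner (H, k) alPredict alUpdate _ (ofReal_sqrt_div_le_one hkT),
    fun w hw h hh x => ?_⟩
  rcases le_or_gt w (T + 1) with hwT | hwT
  · calc _ ≤ ALdim H (k + 1) + k / ENNReal.ofReal √(k / T) + T * ENNReal.ofReal √(k / T) :=
          expMistakes_exploreLearner_alPredict_le H k _ hh x T
      _ = B (k + 1) := by
          rw [add_assoc, div_ofReal_sqrt_add_mul_ofReal_sqrt hkT]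
          simp [B, enatToENNReal_eq]
      _ ≤ B w := hmin w (Finset.mem_Icc.mpr ⟨hw, hwT⟩)
  · have hTw : (T : ℝ) ≤ w - 1 := by
      rw [le_sub_iff_add_le]
      exact_mod_cast hwT.le
    exact (expMistakes_le_rounds _ x _ T).trans ((natCast_le_ofReal_two_sqrt hTw).trans le_add_self)
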